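/- arXiv:1812.06967 — 2 statements merged into one kernel-verified Lean document; each statement's English description precedes it below -/
import Mathlib

section
/- Structure of the solution candidate, case (a): assume ρ > 0, condition (EXP), and max{V̲_own(p*), V̄_own(p*)} ≥ U^S(p*). Then there exists a unique p̌ ∈ (p̲*, p̄*) such that V̲_own(p̌) = V̄_own(p̌); moreover V̲_own(p) > V̄_own(p) for every p ∈ (p̲*, p̌) and V̲_own(p) < V̄_own(p) for every p ∈ (p̌, p̄*). -/
/-!
In the variable `s = normOdds p` (the odds of `p`, rescaled so that `p*` goes to `1`), the
difference `V̲_own - V̄_own` is a positive multiple of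
`branchGap γ τ̲ τ̄ s = s - 1 + τ̲ ^ γ * s ^ (-γ) - τ̄ ^ (-γ) * s ^ (1 + γ)`,
where `γ = ρ / λ` and `τ̲ < τ̄` are the rescaled odds of `p̲* < p̄*` (condition (EXP) puts
both in `(0, 1)`, on either side of `p̂`). This function is positive at `τ̲` and negative at
`τ̄`, and at `s = 1` the case hypothesis reads `1 / (2γ + 1) ≤ max (τ̲ ^ γ) (τ̄ ^ (-γ))`.
When `τ̄ ^ (-γ) ≥ 1 / (2γ + 1)`, Bernoulli's inequality makes `s ^ γ * branchGap γ τ̲ τ̄ s`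
strictly decreasing, so there is exactly one sign change; the substitution `s ↦ s⁻¹`
exchanges the two coefficients and reduces the other case to this one.
-/

set_option linter.unusedVariables false

noncomputable section

def Ur (urR ulR urL ulL lam rho c p : ℝ) : ℝ := p * urR + (1 - p) * urL

def Ul (urR ulR urL ulL lam rho c p : ℝ) : ℝ := p * ulR + (1 - p) * ulL

def U (urR ulR urL ulL lam rho c p : ℝ) : ℝ :=
  max (Ur urR ulR urL ulL lam rho c p) (Ul urR ulR urL ulL lam rho c p)

/-- Stationary value `U^S(p)`. -/
def US (urR ulR urL ulL lam rho c p : ℝ) : ℝ :=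
  (lam * (p * urR + (1 - p) * ulL) - 2 * c) / (2 * rho + lam)

/-- Full-attention value `U^FA(p)`. -/
def UFA (urR ulR urL ulL lam rho c p : ℝ) : ℝ :=
  (lam * (p * urR + (1 - p) * ulL) - c) / (rho + lam)

/-- Lower boundary of the experimentation region. -/
def plowStar (urR ulR urL ulL lam rho c : ℝ) : ℝ :=
  (ulL * rho + c) / (rho * (ulL - ulR) + (urR - ulR) * lam)

/-- Upper boundary of the experimentation region. -/
def phighStar (urR ulR urL ulL lam rho c : ℝ) : ℝ :=
  ((ulL - urL) * lam - urL * rho - c) / (rho * (urR - urL) + (ulL - urL) * lam)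

/-- The absorbing belief `p*`. -/
def pstar (urR ulR urL ulL lam rho c : ℝ) : ℝ :=
  (ulL * rho + c) / ((urR * rho + c) + (ulL * rho + c))

/-- The belief at which `U_r` and `U_ℓ` cross. -/
def phat (urR ulR urL ulL lam rho c : ℝ) : ℝ :=
  (ulL - urL) / ((urR - ulR) + (ulL - urL))

/-- Left branch of the own-biased value (for `ρ > 0`). -/
def Vlown (urR ulR urL ulL lam rho c p : ℝ) : ℝ :=
  -(c / rho) * (1 - p) + ((urR * lam - c) / (lam + rho)) * p
    + (lam * (c + ulL * rho) / (rho * (lam + rho)))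
      * (plowStar urR ulR urL ulL lam rho c
          / (1 - plowStar urR ulR urL ulL lam rho c)) ^ (rho / lam)
      * ((1 - p) / p) ^ (rho / lam) * (1 - p)

/-- Right branch of the own-biased value (for `ρ > 0`). -/
def Vhown (urR ulR urL ulL lam rho c p : ℝ) : ℝ :=
  -(c / rho) * p + ((ulL * lam - c) / (lam + rho)) * (1 - p)
    + (lam * (c + urR * rho) / (rho * (lam + rho)))
      * ((1 - phighStar urR ulR urL ulL lam rho c)
          / phighStar urR ulR urL ulL lam rho c) ^ (rho / lam)
      * (p / (1 - p)) ^ (rho / lam) * p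

open Set Real

structure CrossesDownAt (f : ℝ → ℝ) (a b x₀ : ℝ) : Prop where
  mem : x₀ ∈ Ioo a b
  pos_of_lt : ∀ x ∈ Ioo a x₀, 0 < f x
  apply_eq_zero : f x₀ = 0
  neg_of_gt : ∀ x ∈ Ioo x₀ b, f x < 0

namespace CrossesDownAt

variable {f g w σ : ℝ → ℝ} {a b x₀ : ℝ}

theorem eq_of_apply_eq_zero (h : CrossesDownAt f a b x₀) {x : ℝ} (hx : x ∈ Ioo a b)
    (hfx : f x = 0) : x = x₀ := by
  rcases lt_trichotomy x x₀ with hlt | heq | hgt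
  · exact absurd hfx (h.pos_of_lt x ⟨hx.1, hlt⟩).ne'
  · exact heq
  · exact absurd hfx (h.neg_of_gt x ⟨hgt, hx.2⟩).ne

theorem of_strictAntiOn (hab : a ≤ b) (hf : ContinuousOn f (Icc a b))
    (hanti : StrictAntiOn f (Icc a b)) (ha : 0 < f a) (hb : f b < 0) :
    ∃ x₀, CrossesDownAt f a b x₀ := by
  obtain ⟨x₀, hx₀, hfx₀⟩ := intermediate_value_Ioo' hab hf ⟨hb, ha⟩
  refine ⟨x₀, hx₀, fun x hx => ?_, hfx₀, fun x hx => ?_⟩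
  · rw [← hfx₀]
    exact hanti ⟨hx.1.le, (hx.2.trans hx₀.2).le⟩ (Ioo_subset_Icc_self hx₀) hx.2
  · rw [← hfx₀]
    exact hanti (Ioo_subset_Icc_self hx₀) ⟨(hx₀.1.trans hx.1).le, hx.2.le⟩ hx.1

theorem of_eq_mul (h : CrossesDownAt g a b x₀) (hw : ∀ x ∈ Ioo a b, 0 < w x)
    (hf : ∀ x ∈ Ioo a b, f x = w x * g x) : CrossesDownAt f a b x₀ where
  mem := h.mem
  pos_of_lt x hx := by
    have hx' : x ∈ Ioo a b := ⟨hx.1, hx.2.trans h.mem.2⟩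
    rw [hf x hx']
    exact mul_pos (hw x hx') (h.pos_of_lt x hx)
  apply_eq_zero := by rw [hf x₀ h.mem, h.apply_eq_zero, mul_zero]
  neg_of_gt x hx := by
    have hx' : x ∈ Ioo a b := ⟨h.mem.1.trans hx.1, hx.2⟩
    rw [hf x hx']
    exact mul_neg_of_pos_of_neg (hw x hx') (h.neg_of_gt x hx)

theorem comp_strictMonoOn {s : Set ℝ} [s.OrdConnected] (hσ : StrictMonoOn σ s) (ha : a ∈ s)
    (hb : b ∈ s) (hx₀ : x₀ ∈ s) (h : CrossesDownAt g (σ a) (σ b) (σ x₀)) :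
    CrossesDownAt (g ∘ σ) a b x₀ := by
  have hs : Ioo a b ⊆ s := Ioo_subset_Icc_self.trans (Set.Icc_subset s ha hb)
  have hx₀' : x₀ ∈ Ioo a b :=
    ⟨(hσ.lt_iff_lt ha hx₀).mp h.mem.1, (hσ.lt_iff_lt hx₀ hb).mp h.mem.2⟩
  refine ⟨hx₀', fun x hx => ?_, h.apply_eq_zero, fun x hx => ?_⟩
  · have hxs := hs ⟨hx.1, hx.2.trans hx₀'.2⟩
    exact h.pos_of_lt (σ x) ⟨hσ ha hxs hx.1, hσ hxs hx₀ hx.2⟩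
  · have hxs := hs ⟨hx₀'.1.trans hx.1, hx.2⟩
    exact h.neg_of_gt (σ x) ⟨hσ hx₀ hxs hx.1, hσ hxs hb hx.2⟩

theorem comp_strictAntiOn {s : Set ℝ} [s.OrdConnected] (hσ : StrictAntiOn σ s) (ha : a ∈ s)
    (hb : b ∈ s) (hx₀ : x₀ ∈ s) (h : CrossesDownAt g (σ b) (σ a) (σ x₀)) :
    CrossesDownAt (fun x => -g (σ x)) a b x₀ := by
  have hs : Ioo a b ⊆ s := Ioo_subset_Icc_self.trans (Set.Icc_subset s ha hb)
  have hx₀' : x₀ ∈ Ioo a b :=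
    ⟨(hσ.lt_iff_gt hx₀ ha).mp h.mem.2, (hσ.lt_iff_gt hb hx₀).mp h.mem.1⟩
  refine ⟨hx₀', fun x hx => ?_, by rw [h.apply_eq_zero, neg_zero], fun x hx => ?_⟩
  · have hxs := hs ⟨hx.1, hx.2.trans hx₀'.2⟩
    exact neg_pos.mpr (h.neg_of_gt (σ x) ⟨hσ hxs hx₀ hx.2, hσ ha hxs hx.1⟩)
  · have hxs := hs ⟨hx₀'.1.trans hx.1, hx.2⟩
    exact neg_neg_iff_pos.mpr (h.pos_of_lt (σ x) ⟨hσ hxs hb hx.2, hσ hx₀ hxs hx.1⟩)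

end CrossesDownAt

theorem strictAntiOn_Icc_of_hasDerivAt_neg_of_ne {f f' : ℝ → ℝ} {a b c : ℝ}
    (hf : ContinuousOn f (Icc a b)) (hf' : ∀ x ∈ Ioo a b, x ≠ c → HasDerivAt f (f' x) x)
    (hneg : ∀ x ∈ Ioo a b, x ≠ c → f' x < 0) : StrictAntiOn f (Icc a b) := by
  have piece : ∀ a' b', a ≤ a' → b' ≤ b → c ∉ Ioo a' b' → StrictAntiOn f (Icc a' b') := by
    intro a' b' ha' hb' hc
    refine strictAntiOn_of_deriv_neg (convex_Icc a' b') (hf.mono (Icc_subset_Icc ha' hb'))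
      fun x hx => ?_
    rw [interior_Icc] at hx
    have hx' : x ∈ Ioo a b := ⟨ha'.trans_lt hx.1, hx.2.trans_le hb'⟩
    have hxc : x ≠ c := fun h => hc (h ▸ hx)
    rw [(hf' x hx' hxc).deriv]
    exact hneg x hx' hxc
  by_cases hc : c ∈ Ioo a b
  · rw [← Icc_union_Icc_eq_Icc hc.1.le hc.2.le]
    exact (piece a c le_rfl hc.2.le fun h => lt_irrefl c h.2).union
      (piece c b hc.1.le le_rfl fun h => lt_irrefl c h.1) (isGreatest_Icc hc.1.le)
      (isLeast_Icc hc.2.le)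
  · exact piece a b le_rfl le_rfl hc

def branchGap (γ a b s : ℝ) : ℝ := s - 1 + a ^ γ * s ^ (-γ) - b ^ (-γ) * s ^ (1 + γ)

def scaledBranchGap (γ a b s : ℝ) : ℝ :=
  s ^ (γ + 1) - s ^ γ + a ^ γ - b ^ (-γ) * s ^ (2 * γ + 1)

section BranchGap

variable {γ a b s : ℝ}

theorem branchGap_eq_rpow_neg_mul (hs : 0 < s) :
    branchGap γ a b s = s ^ (-γ) * scaledBranchGap γ a b s := by
  simp only [branchGap, scaledBranchGap, rpow_add_one hs.ne', two_mul, rpow_add hs, rpow_neg hs.le,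
    add_comm 1 γ]
  field_simp

theorem branchGap_eq_mul_neg_branchGap_inv (ha : 0 < a) (hb : 0 < b) (hs : 0 < s) :
    branchGap γ a b s = s * -branchGap γ b⁻¹ a⁻¹ s⁻¹ := by
  simp only [branchGap, rpow_neg, inv_rpow, rpow_add hs, rpow_one, ha.le, hb.le, hs.le, inv_inv]
  field_simp
  ring

theorem continuous_scaledBranchGap (hγ : 0 < γ) : Continuous (scaledBranchGap γ a b) := by
  unfold scaledBranchGap
  fun_prop (disch := positivity)

theorem hasDerivAt_scaledBranchGap (hs : 0 < s) :
    HasDerivAt (scaledBranchGap γ a b)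
      ((γ + 1) * s ^ γ - γ * s ^ (γ - 1) - b ^ (-γ) * ((2 * γ + 1) * s ^ (2 * γ))) s := by
  have h1 := hasDerivAt_rpow_const (x := s) (p := γ + 1) (Or.inl hs.ne')
  have h2 := hasDerivAt_rpow_const (x := s) (p := γ) (Or.inl hs.ne')
  have h3 := hasDerivAt_rpow_const (x := s) (p := 2 * γ + 1) (Or.inl hs.ne')
  have h := ((h1.sub h2).add_const (a ^ γ)).sub (h3.const_mul (b ^ (-γ)))
  rw [add_sub_cancel_right, add_sub_cancel_right] at h
  exact h

theorem strictAntiOn_scaledBranchGap (hγ : 0 < γ) (ha : 0 < a)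
    (h : 1 / (2 * γ + 1) ≤ b ^ (-γ)) : StrictAntiOn (scaledBranchGap γ a b) (Icc a b) := by
  have hQ : 1 ≤ (2 * γ + 1) * b ^ (-γ) := by
    rwa [div_le_iff₀ (by positivity), mul_comm] at h
  refine strictAntiOn_Icc_of_hasDerivAt_neg_of_ne (c := 1)
    (continuous_scaledBranchGap hγ).continuousOn
    (fun s hs _ => hasDerivAt_scaledBranchGap (ha.trans hs.1)) fun s hs hs1 => ?_
  have hs0 : 0 < s := ha.trans hs.1
  have bernoulli : (γ + 1) * s - γ < s ^ (γ + 1) := by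
    have := one_add_mul_self_lt_rpow_one_add (s := s - 1) (p := γ + 1) (by linarith)
      (sub_ne_zero.mpr hs1) (by linarith)
    rw [add_sub_cancel] at this
    linarith
  have key : (γ + 1) * s - γ - (2 * γ + 1) * b ^ (-γ) * s ^ (γ + 1) < 0 := by
    nlinarith [rpow_pos_of_pos hs0 (γ + 1)]
  have e : (γ + 1) * s ^ γ - γ * s ^ (γ - 1) - b ^ (-γ) * ((2 * γ + 1) * s ^ (2 * γ))
      = s ^ (γ - 1) * ((γ + 1) * s - γ - (2 * γ + 1) * b ^ (-γ) * s ^ (γ + 1)) := by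
    rw [rpow_sub_one hs0.ne', rpow_add_one hs0.ne', two_mul, rpow_add hs0]
    field_simp
  rw [e]
  exact mul_neg_of_pos_of_neg (rpow_pos_of_pos hs0 _) key

theorem scaledBranchGap_left_pos (hγ : 0 < γ) (ha : 0 < a) (hab : a < b) :
    0 < scaledBranchGap γ a b a := by
  have hb : 0 < b := ha.trans hab
  have hlt : b ^ (-γ) * a ^ γ < 1 := by
    rw [rpow_neg hb.le, inv_mul_lt_one₀ (by positivity)]
    exact rpow_lt_rpow ha.le hab hγ
  have e : scaledBranchGap γ a b a = a ^ γ * a * (1 - b ^ (-γ) * a ^ γ) := by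
    simp only [scaledBranchGap, rpow_add_one ha.ne', two_mul, rpow_add ha]
    ring
  rw [e]
  exact mul_pos (by positivity) (by linarith)

theorem scaledBranchGap_right_neg (hγ : 0 < γ) (ha : 0 < a) (hab : a < b) :
    scaledBranchGap γ a b b < 0 := by
  have hb : 0 < b := ha.trans hab
  have e : scaledBranchGap γ a b b = a ^ γ - b ^ γ := by
    simp only [scaledBranchGap, rpow_add_one hb.ne', two_mul, rpow_add hb, rpow_neg hb.le]
    field_simp
    ring
  rw [e, sub_neg]
  exact rpow_lt_rpow ha.le hab hγ

theorem branchGap_crossesDownAt_of_le_rpow_neg (hγ : 0 < γ) (ha : 0 < a) (hab : a < b)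
    (h : 1 / (2 * γ + 1) ≤ b ^ (-γ)) : ∃ s₀, CrossesDownAt (branchGap γ a b) a b s₀ := by
  obtain ⟨s₀, hs₀⟩ := CrossesDownAt.of_strictAntiOn hab.le
    (continuous_scaledBranchGap hγ).continuousOn (strictAntiOn_scaledBranchGap hγ ha h)
    (scaledBranchGap_left_pos hγ ha hab) (scaledBranchGap_right_neg hγ ha hab)
  exact ⟨s₀, hs₀.of_eq_mul (fun s hs => rpow_pos_of_pos (ha.trans hs.1) _)
    fun s hs => branchGap_eq_rpow_neg_mul (ha.trans hs.1)⟩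

theorem branchGap_crossesDownAt_of_le_rpow (hγ : 0 < γ) (ha : 0 < a) (hab : a < b)
    (h : 1 / (2 * γ + 1) ≤ a ^ γ) : ∃ s₀, CrossesDownAt (branchGap γ a b) a b s₀ := by
  have hb : 0 < b := ha.trans hab
  have h' : 1 / (2 * γ + 1) ≤ a⁻¹ ^ (-γ) := by rwa [inv_rpow ha.le, rpow_neg ha.le, inv_inv]
  obtain ⟨y₀, hy₀⟩ :=
    branchGap_crossesDownAt_of_le_rpow_neg hγ (inv_pos.mpr hb) (inv_strictAnti₀ ha hab) h'
  have hy₀_pos : 0 < y₀ := (inv_pos.mpr hb).trans hy₀.mem.1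
  rw [← inv_inv y₀] at hy₀
  have hinv := hy₀.comp_strictAntiOn (s := Ioi 0) strictAntiOn_inv_pos ha hb (inv_pos.mpr hy₀_pos)
  exact ⟨y₀⁻¹, hinv.of_eq_mul (w := id) (fun s hs => ha.trans hs.1)
    fun s hs => branchGap_eq_mul_neg_branchGap_inv ha hb (ha.trans hs.1)⟩

theorem branchGap_crossesDownAt (hγ : 0 < γ) (ha : 0 < a) (hab : a < b)
    (h : 1 / (2 * γ + 1) ≤ max (a ^ γ) (b ^ (-γ))) :
    ∃ s₀, CrossesDownAt (branchGap γ a b) a b s₀ :=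
  (le_max_iff.mp h).elim (branchGap_crossesDownAt_of_le_rpow hγ ha hab)
    (branchGap_crossesDownAt_of_le_rpow_neg hγ ha hab)

end BranchGap

def normOdds (urR ulL rho c p : ℝ) : ℝ := (urR * rho + c) * p / ((ulL * rho + c) * (1 - p))

section Model

variable {urR ulR urL ulL lam rho c : ℝ}

theorem normOdds_pos (hR : 0 < urR * rho + c) (hL : 0 < ulL * rho + c) {p : ℝ}
    (hp : p ∈ Ioo 0 1) : 0 < normOdds urR ulL rho c p :=
  div_pos (mul_pos hR hp.1) (mul_pos hL (sub_pos.mpr hp.2))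

theorem normOdds_strictMonoOn (hR : 0 < urR * rho + c) (hL : 0 < ulL * rho + c) :
    StrictMonoOn (normOdds urR ulL rho c) (Ioo 0 1) := by
  intro p hp q hq hpq
  rw [normOdds, normOdds, div_lt_div_iff₀ (mul_pos hL (sub_pos.mpr hp.2))
    (mul_pos hL (sub_pos.mpr hq.2))]
  nlinarith [mul_pos hR hL]

theorem exists_normOdds_eq (hR : 0 < urR * rho + c) (hL : 0 < ulL * rho + c) {s : ℝ}
    (hs : 0 < s) : ∃ p ∈ Ioo 0 1, normOdds urR ulL rho c p = s := by
  unfold normOdds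
  generalize urR * rho + c = R at hR ⊢
  generalize ulL * rho + c = L at hL ⊢
  have hden : 0 < R + L * s := by positivity
  refine ⟨L * s / (R + L * s), ⟨by positivity, (div_lt_one hden).mpr (by linarith)⟩, ?_⟩
  rw [one_sub_div hden.ne', add_sub_cancel_right]
  field_simp

theorem mul_one_sub_mul_normOdds (hL : 0 < ulL * rho + c) {p : ℝ} (hp : p < 1) :
    (ulL * rho + c) * (1 - p) * normOdds urR ulL rho c p = (urR * rho + c) * p := by
  rw [normOdds]
  field_simp [(sub_pos.mpr hp).ne']

theorem pstar_mem_Ioo (hR : 0 < urR * rho + c) (hL : 0 < ulL * rho + c) :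
    pstar urR ulR urL ulL lam rho c ∈ Ioo 0 1 :=
  ⟨div_pos (by linarith) (by linarith), (div_lt_one (by linarith)).mpr (by linarith)⟩

theorem normOdds_pstar (hR : 0 < urR * rho + c) (hL : 0 < ulL * rho + c) :
    normOdds urR ulL rho c (pstar urR ulR urL ulL lam rho c) = 1 := by
  unfold normOdds pstar
  generalize urR * rho + c = R at hR ⊢
  generalize ulL * rho + c = L at hL ⊢
  rw [one_sub_div (by positivity), add_sub_cancel_right]
  field_simp

theorem phat_mem_Ioo (hr : ulR < urR) (hl : urL < ulL) : phat urR ulR urL ulL lam rho c ∈ Ioo 0 1 :=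
  ⟨div_pos (by linarith) (by linarith), (div_lt_one (by linarith)).mpr (by linarith)⟩

theorem plowStar_pos_and_lt (hrho_lam : 0 < rho + lam) (hL : 0 < ulL * rho + c) {q : ℝ} (hq : 0 < q)
    (h : Ul urR ulR urL ulL lam rho c q < UFA urR ulR urL ulL lam rho c q) :
    0 < plowStar urR ulR urL ulL lam rho c ∧ plowStar urR ulR urL ulL lam rho c < q := by
  rw [Ul, UFA, lt_div_iff₀ hrho_lam] at h
  have key : ulL * rho + c < q * (rho * (ulL - ulR) + (urR - ulR) * lam) := by linarith
  have hden : 0 < rho * (ulL - ulR) + (urR - ulR) * lam := pos_of_mul_pos_right (hL.trans key) hq.le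
  exact ⟨div_pos hL hden, (div_lt_iff₀ hden).mpr (by linarith)⟩

theorem lt_phighStar_and_lt_one (hrho_lam : 0 < rho + lam) (hR : 0 < urR * rho + c) {q : ℝ}
    (hq : q < 1) (h : Ur urR ulR urL ulL lam rho c q < UFA urR ulR urL ulL lam rho c q) :
    q < phighStar urR ulR urL ulL lam rho c ∧ phighStar urR ulR urL ulL lam rho c < 1 := by
  rw [Ur, UFA, lt_div_iff₀ hrho_lam] at h
  have key : q * (rho * (urR - urL) + (ulL - urL) * lam) < (ulL - urL) * lam - urL * rho - c := by
    linarith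
  have hden : 0 < rho * (urR - urL) + (ulL - urL) * lam :=
    pos_of_mul_pos_right (by linarith : 0 < (1 - q) * (rho * (urR - urL) + (ulL - urL) * lam))
      (sub_pos.mpr hq).le
  exact ⟨(lt_div_iff₀ hden).mpr (by linarith), (div_lt_one hden).mpr (by linarith)⟩

theorem Vlown_eq (hR : 0 < urR * rho + c) (hL : 0 < ulL * rho + c)
    (hpl : plowStar urR ulR urL ulL lam rho c ∈ Ioo 0 1) {p : ℝ} (hp : p ∈ Ioo 0 1) :
    Vlown urR ulR urL ulL lam rho c p =
      -(c / rho) * (1 - p) + (urR * lam - c) / (lam + rho) * p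
        + lam * (ulL * rho + c) / (rho * (lam + rho)) * (1 - p)
          * (normOdds urR ulL rho c (plowStar urR ulR urL ulL lam rho c) ^ (rho / lam)
            * normOdds urR ulL rho c p ^ (-(rho / lam))) := by
  unfold Vlown
  set pl := plowStar urR ulR urL ulL lam rho c
  have hratio : pl / (1 - pl) * ((1 - p) / p)
      = normOdds urR ulL rho c pl / normOdds urR ulL rho c p := by
    have := (sub_pos.mpr hpl.2).ne'
    have := (sub_pos.mpr hp.2).ne'
    unfold normOdds
    generalize urR * rho + c = R at hR ⊢
    generalize ulL * rho + c = L at hL ⊢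
    field_simp
  have hpow : (pl / (1 - pl)) ^ (rho / lam) * ((1 - p) / p) ^ (rho / lam)
      = normOdds urR ulL rho c pl ^ (rho / lam) * normOdds urR ulL rho c p ^ (-(rho / lam)) := by
    rw [← mul_rpow (div_nonneg hpl.1.le (sub_pos.mpr hpl.2).le)
      (div_nonneg (sub_pos.mpr hp.2).le hp.1.le), hratio,
      div_rpow (normOdds_pos hR hL hpl).le (normOdds_pos hR hL hp).le,
      rpow_neg (normOdds_pos hR hL hp).le, div_eq_mul_inv]
  linear_combination lam * (c + ulL * rho) / (rho * (lam + rho)) * (1 - p) * hpow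

theorem Vhown_eq (hR : 0 < urR * rho + c) (hL : 0 < ulL * rho + c)
    (hph : phighStar urR ulR urL ulL lam rho c ∈ Ioo 0 1) {p : ℝ} (hp : p ∈ Ioo 0 1) :
    Vhown urR ulR urL ulL lam rho c p =
      -(c / rho) * p + (ulL * lam - c) / (lam + rho) * (1 - p)
        + lam * (ulL * rho + c) / (rho * (lam + rho)) * (1 - p)
          * (normOdds urR ulL rho c (phighStar urR ulR urL ulL lam rho c) ^ (-(rho / lam))
            * normOdds urR ulL rho c p ^ (1 + rho / lam)) := by
  unfold Vhown
  set ph := phighStar urR ulR urL ulL lam rho c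
  have hratio : (1 - ph) / ph * (p / (1 - p))
      = normOdds urR ulL rho c p / normOdds urR ulL rho c ph := by
    have := (sub_pos.mpr hph.2).ne'
    have := (sub_pos.mpr hp.2).ne'
    unfold normOdds
    generalize urR * rho + c = R at hR ⊢
    generalize ulL * rho + c = L at hL ⊢
    field_simp
  have hpow : ((1 - ph) / ph) ^ (rho / lam) * (p / (1 - p)) ^ (rho / lam)
      = normOdds urR ulL rho c ph ^ (-(rho / lam)) * normOdds urR ulL rho c p ^ (rho / lam) := by
    rw [← mul_rpow (div_nonneg (sub_pos.mpr hph.2).le hph.1.le)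
      (div_nonneg hp.1.le (sub_pos.mpr hp.2).le), hratio,
      div_rpow (normOdds_pos hR hL hp).le (normOdds_pos hR hL hph).le,
      rpow_neg (normOdds_pos hR hL hph).le, div_eq_mul_inv, mul_comm]
  rw [rpow_add (normOdds_pos hR hL hp), rpow_one]
  linear_combination lam * (c + urR * rho) / (rho * (lam + rho)) * p * hpow
    - lam / (rho * (lam + rho)) * normOdds urR ulL rho c ph ^ (-(rho / lam))
      * normOdds urR ulL rho c p ^ (rho / lam) * mul_one_sub_mul_normOdds (urR := urR) hL hp.2

theorem Vlown_sub_Vhown (hlam : 0 < lam) (hrho : 0 < rho) (hR : 0 < urR * rho + c)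
    (hL : 0 < ulL * rho + c) (hpl : plowStar urR ulR urL ulL lam rho c ∈ Ioo 0 1)
    (hph : phighStar urR ulR urL ulL lam rho c ∈ Ioo 0 1) {p : ℝ} (hp : p ∈ Ioo 0 1) :
    Vlown urR ulR urL ulL lam rho c p - Vhown urR ulR urL ulL lam rho c p =
      lam * (ulL * rho + c) / (rho * (lam + rho)) * (1 - p)
        * branchGap (rho / lam) (normOdds urR ulL rho c (plowStar urR ulR urL ulL lam rho c))
          (normOdds urR ulL rho c (phighStar urR ulR urL ulL lam rho c))
          (normOdds urR ulL rho c p) := by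
  have hlin : -(c / rho) * (1 - p) + (urR * lam - c) / (lam + rho) * p
      - (-(c / rho) * p + (ulL * lam - c) / (lam + rho) * (1 - p))
      = lam / (rho * (lam + rho)) * ((urR * rho + c) * p - (ulL * rho + c) * (1 - p)) := by
    field_simp
    ring
  rw [Vlown_eq hR hL hpl hp, Vhown_eq hR hL hph hp, branchGap]
  linear_combination
    hlin - lam / (rho * (lam + rho)) * mul_one_sub_mul_normOdds (urR := urR) hL hp.2

theorem mul_pstar_eq (hR : 0 < urR * rho + c) (hL : 0 < ulL * rho + c) :
    (urR * rho + c) * pstar urR ulR urL ulL lam rho c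
      = (ulL * rho + c) * (1 - pstar urR ulR urL ulL lam rho c) := by
  rw [← mul_one_sub_mul_normOdds hL (pstar_mem_Ioo hR hL).2, normOdds_pstar hR hL, mul_one]

theorem Vlown_pstar_sub_US (hlam : 0 < lam) (hrho : 0 < rho) (hR : 0 < urR * rho + c)
    (hL : 0 < ulL * rho + c) (hpl : plowStar urR ulR urL ulL lam rho c ∈ Ioo 0 1) :
    Vlown urR ulR urL ulL lam rho c (pstar urR ulR urL ulL lam rho c)
        - US urR ulR urL ulL lam rho c (pstar urR ulR urL ulL lam rho c) =
      lam * (ulL * rho + c) / (rho * (lam + rho)) * (1 - pstar urR ulR urL ulL lam rho c)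
        * (normOdds urR ulL rho c (plowStar urR ulR urL ulL lam rho c) ^ (rho / lam)
          - 1 / (2 * (rho / lam) + 1)) := by
  rw [Vlown_eq hR hL hpl (pstar_mem_Ioo hR hL), normOdds_pstar hR hL, one_rpow, mul_one, US]
  set q := pstar urR ulR urL ulL lam rho c
  have hlin : -(c / rho) * (1 - q) + (urR * lam - c) / (lam + rho) * q
      - (lam * (q * urR + (1 - q) * ulL) - 2 * c) / (2 * rho + lam)
      + lam * (ulL * rho + c) / (rho * (lam + rho)) * (1 - q) / (2 * (rho / lam) + 1)
      = lam / ((lam + rho) * (2 * rho + lam))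
        * ((urR * rho + c) * q - (ulL * rho + c) * (1 - q)) := by
    field_simp
    ring
  linear_combination hlin + lam / ((lam + rho) * (2 * rho + lam)) * mul_pstar_eq hR hL

theorem Vhown_pstar_sub_US (hlam : 0 < lam) (hrho : 0 < rho) (hR : 0 < urR * rho + c)
    (hL : 0 < ulL * rho + c) (hph : phighStar urR ulR urL ulL lam rho c ∈ Ioo 0 1) :
    Vhown urR ulR urL ulL lam rho c (pstar urR ulR urL ulL lam rho c)
        - US urR ulR urL ulL lam rho c (pstar urR ulR urL ulL lam rho c) =
      lam * (ulL * rho + c) / (rho * (lam + rho)) * (1 - pstar urR ulR urL ulL lam rho c)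
        * (normOdds urR ulL rho c (phighStar urR ulR urL ulL lam rho c) ^ (-(rho / lam))
          - 1 / (2 * (rho / lam) + 1)) := by
  rw [Vhown_eq hR hL hph (pstar_mem_Ioo hR hL), normOdds_pstar hR hL, one_rpow, mul_one, US]
  set q := pstar urR ulR urL ulL lam rho c
  have hlin : -(c / rho) * q + (ulL * lam - c) / (lam + rho) * (1 - q)
      - (lam * (q * urR + (1 - q) * ulL) - 2 * c) / (2 * rho + lam)
      + lam * (ulL * rho + c) / (rho * (lam + rho)) * (1 - q) / (2 * (rho / lam) + 1)
      = -lam / (rho * (2 * rho + lam))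
        * ((urR * rho + c) * q - (ulL * rho + c) * (1 - q)) := by
    field_simp
    ring
  linear_combination hlin - lam / (rho * (2 * rho + lam)) * mul_pstar_eq hR hL

theorem one_div_le_max_rpow_normOdds (hlam : 0 < lam) (hrho : 0 < rho) (hR : 0 < urR * rho + c)
    (hL : 0 < ulL * rho + c) (hpl : plowStar urR ulR urL ulL lam rho c ∈ Ioo 0 1)
    (hph : phighStar urR ulR urL ulL lam rho c ∈ Ioo 0 1)
    (h : US urR ulR urL ulL lam rho c (pstar urR ulR urL ulL lam rho c)
      ≤ max (Vlown urR ulR urL ulL lam rho c (pstar urR ulR urL ulL lam rho c))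
        (Vhown urR ulR urL ulL lam rho c (pstar urR ulR urL ulL lam rho c))) :
    1 / (2 * (rho / lam) + 1) ≤
      max (normOdds urR ulL rho c (plowStar urR ulR urL ulL lam rho c) ^ (rho / lam))
        (normOdds urR ulL rho c (phighStar urR ulR urL ulL lam rho c) ^ (-(rho / lam))) := by
  have hκ :
      0 < lam * (ulL * rho + c) / (rho * (lam + rho)) * (1 - pstar urR ulR urL ulL lam rho c) :=
    mul_pos (div_pos (mul_pos hlam hL) (by positivity)) (sub_pos.mpr (pstar_mem_Ioo hR hL).2)
  rw [← sub_nonneg, ← mul_nonneg_iff_of_pos_left hκ, ← max_sub_sub_right,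
    mul_max_of_nonneg _ _ hκ.le, ← Vlown_pstar_sub_US hlam hrho hR hL hpl,
    ← Vhown_pstar_sub_US hlam hrho hR hL hph, max_sub_sub_right]
  exact sub_nonneg.mpr h

theorem crossesDownAt_Vlown_sub_Vhown (hlam : 0 < lam) (hrho : 0 < rho) (hR : 0 < urR * rho + c)
    (hL : 0 < ulL * rho + c) (hpl : plowStar urR ulR urL ulL lam rho c ∈ Ioo 0 1)
    (hph : phighStar urR ulR urL ulL lam rho c ∈ Ioo 0 1) {pc : ℝ} (hpc : pc ∈ Ioo 0 1)
    (h : CrossesDownAt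
      (branchGap (rho / lam) (normOdds urR ulL rho c (plowStar urR ulR urL ulL lam rho c))
        (normOdds urR ulL rho c (phighStar urR ulR urL ulL lam rho c)))
      (normOdds urR ulL rho c (plowStar urR ulR urL ulL lam rho c))
      (normOdds urR ulL rho c (phighStar urR ulR urL ulL lam rho c))
      (normOdds urR ulL rho c pc)) :
    CrossesDownAt (fun p => Vlown urR ulR urL ulL lam rho c p - Vhown urR ulR urL ulL lam rho c p)
      (plowStar urR ulR urL ulL lam rho c) (phighStar urR ulR urL ulL lam rho c) pc := by
  have hsub : Ioo (plowStar urR ulR urL ulL lam rho c) (phighStar urR ulR urL ulL lam rho c)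
      ⊆ Ioo 0 1 := Ioo_subset_Ioo hpl.1.le hph.2.le
  refine (h.comp_strictMonoOn (normOdds_strictMonoOn hR hL) hpl hph hpc).of_eq_mul
    (fun p hp => ?_) (fun p hp => Vlown_sub_Vhown hlam hrho hR hL hpl hph (hsub hp))
  exact mul_pos (div_pos (mul_pos hlam hL) (by positivity)) (sub_pos.mpr (hsub hp).2)

end Model

/-- Structure of the solution candidate, case (a): if the own-biased value weakly exceeds
the stationary value at `p*`, the two own-biased branches cross exactly once in
`(p̲*, p̄*)`, with `V̲_own` above to the left and below to the right. -/
theorem candidate_structure_case_a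
    (urR ulR urL ulL lam rho c : ℝ)
    (h_urR : urR > max 0 ulR) (h_ulL : ulL > max 0 urL)
    (h_lam : 0 < lam) (h_rho : 0 < rho) (h_c : 0 ≤ c)
    (h_EXP : UFA urR ulR urL ulL lam rho c (phat urR ulR urL ulL lam rho c)
      > U urR ulR urL ulL lam rho c (phat urR ulR urL ulL lam rho c))
    (h_case : max (Vlown urR ulR urL ulL lam rho c (pstar urR ulR urL ulL lam rho c))
        (Vhown urR ulR urL ulL lam rho c (pstar urR ulR urL ulL lam rho c))
      ≥ US urR ulR urL ulL lam rho c (pstar urR ulR urL ulL lam rho c)) :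
    ∃ pc ∈ Set.Ioo (plowStar urR ulR urL ulL lam rho c)
        (phighStar urR ulR urL ulL lam rho c),
      Vlown urR ulR urL ulL lam rho c pc = Vhown urR ulR urL ulL lam rho c pc
      ∧ (∀ q ∈ Set.Ioo (plowStar urR ulR urL ulL lam rho c)
            (phighStar urR ulR urL ulL lam rho c),
          Vlown urR ulR urL ulL lam rho c q = Vhown urR ulR urL ulL lam rho c q → q = pc)
      ∧ (∀ q ∈ Set.Ioo (plowStar urR ulR urL ulL lam rho c) pc,
          Vhown urR ulR urL ulL lam rho c q < Vlown urR ulR urL ulL lam rho c q)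
      ∧ (∀ q ∈ Set.Ioo pc (phighStar urR ulR urL ulL lam rho c),
          Vlown urR ulR urL ulL lam rho c q < Vhown urR ulR urL ulL lam rho c q) := by
  obtain ⟨h_urR_pos, h_ulR_lt⟩ := max_lt_iff.mp h_urR
  obtain ⟨h_ulL_pos, h_urL_lt⟩ := max_lt_iff.mp h_ulL
  have hR : 0 < urR * rho + c := by positivity
  have hL : 0 < ulL * rho + c := by positivity
  have hphat := phat_mem_Ioo (lam := lam) (rho := rho) (c := c) h_ulR_lt h_urL_lt
  obtain ⟨hpl_pos, hpl_lt⟩ := plowStar_pos_and_lt (by positivity) hL hphat.1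
    ((le_max_right _ _).trans_lt h_EXP)
  obtain ⟨hph_gt, hph_lt⟩ := lt_phighStar_and_lt_one (by positivity) hR hphat.2
    ((le_max_left _ _).trans_lt h_EXP)
  have hpl : plowStar urR ulR urL ulL lam rho c ∈ Ioo 0 1 := ⟨hpl_pos, hpl_lt.trans hphat.2⟩
  have hph : phighStar urR ulR urL ulL lam rho c ∈ Ioo 0 1 := ⟨hphat.1.trans hph_gt, hph_lt⟩
  obtain ⟨s₀, hs₀⟩ := branchGap_crossesDownAt (div_pos h_rho h_lam) (normOdds_pos hR hL hpl)
    (normOdds_strictMonoOn hR hL hpl hph (hpl_lt.trans hph_gt))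
    (one_div_le_max_rpow_normOdds h_lam h_rho hR hL hpl hph h_case)
  obtain ⟨pc, hpc, rfl⟩ := exists_normOdds_eq hR hL ((normOdds_pos hR hL hpl).trans hs₀.mem.1)
  have h := crossesDownAt_Vlown_sub_Vhown h_lam h_rho hR hL hpl hph hpc hs₀
  exact ⟨pc, h.mem, sub_eq_zero.mp h.apply_eq_zero,
    fun q hq hq_eq => h.eq_of_apply_eq_zero hq (sub_eq_zero.mpr hq_eq),
    fun q hq => sub_pos.mp (h.pos_of_lt q hq), fun q hq => sub_neg.mp (h.neg_of_gt q hq)⟩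
end
end

section
/- Structure of the solution candidate, case (b): assume ρ > 0, condition (EXP), and max{V̲_own(p*), V̄_own(p*)} < U^S(p*). Then p̲* < p* < p̄*; there exists a unique p̲ ∈ (p̲*, p*) with V̲_own(p̲) = V̲_opp(p̲), and V̲_own(p) > V̲_opp(p) for every p ∈ (p̲*, p̲) while V̲_own(p) < V̲_opp(p) for every p ∈ (p̲, p*); and there exists a unique p̄ ∈ (p*, p̄*) with V̄_own(p̄) = V̄_opp(p̄), and V̄_own(p) < V̄_opp(p) for every p ∈ (p*, p̄) while V̄_own(p) > V̄_opp(p) for every p ∈ (p̄, p̄*). -/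
set_option linter.unusedVariables false

noncomputable section

/-- Left branch of the opposite-biased value (for `ρ > 0`). -/
def Vlopp (urR ulR urL ulL lam rho c p : ℝ) : ℝ :=
  -(c / rho) * p + ((ulL * lam - c) / (lam + rho)) * (1 - p)
    + (lam / (rho * (2 * rho + lam))) * (lam * (urR * rho + c) / (lam + rho))
      * (((1 - pstar urR ulR urL ulL lam rho c) / pstar urR ulR urL ulL lam rho c)
          * (p / (1 - p))) ^ (rho / lam) * p

/-- Right branch of the opposite-biased value (for `ρ > 0`). -/
def Vhopp (urR ulR urL ulL lam rho c p : ℝ) : ℝ :=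
  -(c / rho) * (1 - p) + ((urR * lam - c) / (lam + rho)) * p
    + (lam / (rho * (2 * rho + lam))) * (lam * (ulL * rho + c) / (lam + rho))
      * ((pstar urR ulR urL ulL lam rho c / (1 - pstar urR ulR urL ulL lam rho c))
          * ((1 - p) / p)) ^ (rho / lam) * (1 - p)

/-!
Both lower branches solve first-order linear ODEs on `(0, 1)` (their HJB equations), so at a
point where `V̲_own = V̲_opp = V` subtracting them gives
`λ p (1 - p) (V̲_own - V̲_opp)' = (2ρ + λ) (U^S - V)`. Below `p*` the opposite-biased branch lies
strictly above `U^S`: in the variable `x = (p / (1 - p)) / (p* / (1 - p*))` the difference is a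
positive multiple of the gap between `x ^ (1 + ρ/λ)` and its tangent at `x = 1` (Bernoulli).
Hence every crossing on `(p̲*, p*)` is a strict down-crossing, so there is at most one; and one
exists because `V̲_own - V̲_opp` is positive at `p̲*` and equals `V̲_own - U^S < 0` at `p*`.
Condition (EXP) gives `p̲* < 1` and `p̄* > 0`. The upper branches are the mirror image of the
lower ones under `p ↦ 1 - p` with the two states exchanged.
-/

open Set Filter Topology

section Crossing

variable {f g f' g' : ℝ → ℝ} {a b d z : ℝ}

lemma HasDerivAt.eventually_neg_nhdsGT (hf : HasDerivAt f d z) (hz : f z = 0) (hd : d < 0) :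
    ∀ᶠ x in 𝓝[>] z, f x < 0 := by
  have hslope := (hasDerivAt_iff_tendsto_slope.mp hf).mono_left (nhdsGT_le_nhdsNE z)
  filter_upwards [hslope.eventually_lt_const hd, self_mem_nhdsWithin] with x hx hzx
  rwa [slope_def_field, hz, sub_zero, div_lt_iff₀ (sub_pos.2 hzx), zero_mul] at hx

lemma HasDerivAt.eventually_pos_nhdsLT (hf : HasDerivAt f d z) (hz : f z = 0) (hd : d < 0) :
    ∀ᶠ x in 𝓝[<] z, 0 < f x := by
  have hslope := (hasDerivAt_iff_tendsto_slope.mp hf).mono_left (nhdsLT_le_nhdsNE z)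
  filter_upwards [hslope.eventually_lt_const hd, self_mem_nhdsWithin] with x hx hxz
  rwa [slope_def_field, hz, sub_zero, div_lt_iff_of_neg (sub_neg.2 hxz), zero_mul] at hx

/-- Between two down-crossings of zero there would have to be an up-crossing: take the first
zero after a point where `f` has already turned negative. -/
lemma subsingleton_zeros_of_hasDerivAt_neg (hcont : ContinuousOn f (Icc a b))
    (hf : ∀ x ∈ Ioo a b, HasDerivAt f (f' x) x) (hf' : ∀ x ∈ Ioo a b, f x = 0 → f' x < 0) :
    (Ioo a b ∩ f ⁻¹' {0}).Subsingleton := by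
  suffices h : ∀ z₁ ∈ Ioo a b ∩ f ⁻¹' {0}, ∀ z₂ ∈ Ioo a b ∩ f ⁻¹' {0}, ¬z₁ < z₂ from
    fun z₁ h₁ z₂ h₂ => le_antisymm (not_lt.1 (h z₂ h₂ z₁ h₁)) (not_lt.1 (h z₁ h₁ z₂ h₂))
  rintro z₁ ⟨hz₁, hfz₁ : f z₁ = 0⟩ z₂ ⟨hz₂, hfz₂ : f z₂ = 0⟩ h₁₂
  obtain ⟨x, hfx, hx⟩ :=
    (((hf z₁ hz₁).eventually_neg_nhdsGT hfz₁ (hf' z₁ hz₁ hfz₁)).and (Ioo_mem_nhdsGT h₁₂)).exists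
  have hsub : Icc x z₂ ⊆ Icc a b := Icc_subset_Icc (hz₁.1.trans hx.1).le hz₂.2.le
  set Z := Icc x z₂ ∩ f ⁻¹' {0}
  have hZ : IsClosed Z := (hcont.mono hsub).preimage_isClosed_of_isClosed isClosed_Icc
    isClosed_singleton
  have hZb : BddBelow Z := ⟨x, fun _ hy => hy.1.1⟩
  have hw : sInf Z ∈ Z := hZ.csInf_mem ⟨z₂, ⟨hx.2.le, le_rfl⟩, hfz₂⟩ hZb
  have hxw : x < sInf Z := hw.1.1.lt_of_ne (by rintro h; rw [← h] at hw; exact hfx.ne hw.2)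
  have hwab : sInf Z ∈ Ioo a b := ⟨(hz₁.1.trans hx.1).trans hxw, hw.1.2.trans_lt hz₂.2⟩
  obtain ⟨y, hfy, hy⟩ := (((hf _ hwab).eventually_pos_nhdsLT hw.2 (hf' _ hwab hw.2)).and
    (Ioo_mem_nhdsLT hxw)).exists
  obtain ⟨v, hv, hfv⟩ := intermediate_value_Icc hy.1.le
    (hcont.mono ((Icc_subset_Icc le_rfl (hy.2.trans_le hw.1.2).le).trans hsub))
    ⟨hfx.le, hfy.le⟩
  have := csInf_le hZb ⟨⟨hv.1, hv.2.trans (hy.2.le.trans hw.1.2)⟩, hfv⟩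
  linarith [hv.2, hy.2]

def CrossesDownAt_s12 (f g : ℝ → ℝ) (a b z : ℝ) : Prop :=
  z ∈ Ioo a b ∧ f z = g z ∧ (∀ q ∈ Ioo a b, f q = g q → q = z) ∧
    (∀ q ∈ Ioo a z, g q < f q) ∧ ∀ q ∈ Ioo z b, f q < g q

def CrossesUpAt (f g : ℝ → ℝ) (a b z : ℝ) : Prop :=
  z ∈ Ioo a b ∧ f z = g z ∧ (∀ q ∈ Ioo a b, f q = g q → q = z) ∧
    (∀ q ∈ Ioo a z, f q < g q) ∧ ∀ q ∈ Ioo z b, g q < f q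

theorem exists_crossesDownAt (hab : a ≤ b)
    (hf : ∀ x ∈ Icc a b, HasDerivAt f (f' x) x) (hg : ∀ x ∈ Icc a b, HasDerivAt g (g' x) x)
    (hcross : ∀ x ∈ Ioo a b, f x = g x → f' x < g' x) (ha : g a < f a) (hb : f b < g b) :
    ∃ z, CrossesDownAt_s12 f g a b z := by
  have hd : ∀ x ∈ Icc a b, HasDerivAt (fun q => f q - g q) (f' x - g' x) x :=
    fun x hx => (hf x hx).sub (hg x hx)
  have hcont : ContinuousOn (fun q => f q - g q) (Icc a b) :=
    fun x hx => (hd x hx).continuousAt.continuousWithinAt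
  obtain ⟨z, hz, hfz⟩ := intermediate_value_Ioo' hab hcont ⟨sub_neg.2 hb, sub_pos.2 ha⟩
  have huniq : ∀ q ∈ Ioo a b, f q = g q → q = z := fun q hq hfq =>
    subsingleton_zeros_of_hasDerivAt_neg hcont (fun x hx => hd x (Ioo_subset_Icc_self hx))
      (fun x hx hx0 => sub_neg.2 (hcross x hx (sub_eq_zero.1 hx0)))
      ⟨hq, sub_eq_zero.2 hfq⟩ ⟨hz, hfz⟩
  refine ⟨z, hz, sub_eq_zero.1 hfz, huniq, fun q hq => ?_, fun q hq => ?_⟩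
  · by_contra! hfq
    obtain ⟨y, hy, hfy⟩ := intermediate_value_Ioc' hq.1.le
      (hcont.mono (Icc_subset_Icc le_rfl (hq.2.trans hz.2).le)) ⟨sub_nonpos.2 hfq, sub_pos.2 ha⟩
    linarith [huniq y ⟨hy.1, hy.2.trans_lt (hq.2.trans hz.2)⟩ (sub_eq_zero.1 hfy), hy.2, hq.2]
  · by_contra! hfq
    obtain ⟨y, hy, hfy⟩ := intermediate_value_Ico' hq.2.le
      (hcont.mono (Icc_subset_Icc (hz.1.trans hq.1).le le_rfl)) ⟨sub_neg.2 hb, sub_nonneg.2 hfq⟩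
    linarith [huniq y ⟨(hz.1.trans hq.1).trans_le hy.1, hy.2⟩ (sub_eq_zero.1 hfy), hy.1, hq.1]

lemma CrossesDownAt_s12.comp_one_sub (h : CrossesDownAt_s12 f g a b z) :
    CrossesUpAt (fun q => f (1 - q)) (fun q => g (1 - q)) (1 - b) (1 - a) (1 - z) := by
  obtain ⟨hz, hfz, huniq, hleft, hright⟩ := h
  refine ⟨⟨by linarith [hz.2], by linarith [hz.1]⟩, by simpa using hfz, fun q hq hfq => ?_,
    fun q hq => hright _ ⟨by linarith [hq.2], by linarith [hq.1]⟩,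
    fun q hq => hleft _ ⟨by linarith [hq.2], by linarith [hq.1]⟩⟩
  linarith [huniq (1 - q) ⟨by linarith [hq.2], by linarith [hq.1]⟩ hfq]

end Crossing

/-- How far `x ^ (1 + β)` lies above its tangent line at `x = 1`. -/
def tangentGap (β x : ℝ) : ℝ := x * x ^ β - (1 + (1 + β) * (x - 1))

lemma tangentGap_one (β : ℝ) : tangentGap β 1 = 0 := by simp [tangentGap]

lemma tangentGap_pos {β x : ℝ} (hβ : 0 < β) (hx : 0 < x) (hx₁ : x ≠ 1) : 0 < tangentGap β x := by
  have h := one_add_mul_self_lt_rpow_one_add (s := x - 1) (by linarith) (sub_ne_zero.2 hx₁)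
    (p := 1 + β) (by linarith)
  rw [add_sub_cancel, Real.rpow_add hx, Real.rpow_one] at h
  exact sub_pos.2 h

lemma tangentGap_lt {β x : ℝ} (hβ : 0 < β) (hx : 0 < x) (hx₁ : x < 1) :
    tangentGap β x < β * (1 - x) := by
  have := mul_lt_of_lt_one_right hx (Real.rpow_lt_one hx.le hx₁ hβ)
  unfold tangentGap
  linarith

lemma hasDerivAt_odds_rpow_mul_self {α p : ℝ} (hp₀ : 0 < p) (hp₁ : p < 1) :
    HasDerivAt (fun q => (q / (1 - q)) ^ α * q)
      ((α + 1 - p) / (p * (1 - p)) * ((p / (1 - p)) ^ α * p)) p := by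
  have hq : 0 < 1 - p := sub_pos.2 hp₁
  have hodds : HasDerivAt (fun q => q / (1 - q)) (1 / (1 - p) ^ 2) p := by
    refine ((hasDerivAt_id p).div ((hasDerivAt_id p).const_sub 1) hq.ne').congr_deriv ?_
    simp only [id]; field_simp; ring
  refine ((hodds.rpow_const (p := α) (Or.inl (div_pos hp₀ hq).ne')).mul
    (hasDerivAt_id p)).congr_deriv ?_
  rw [Real.rpow_sub_one (div_pos hp₀ hq).ne']
  simp only [id]; field_simp; ring

section Branches

variable {urR ulR urL ulL lam rho c p : ℝ}

local notation "p⋆" => pstar urR ulR urL ulL lam rho c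
local notation "p̲⋆" => plowStar urR ulR urL ulL lam rho c

lemma pstar_mem_Ioo_s12 (hu : 0 < ulL * rho + c) (hv : 0 < urR * rho + c) : p⋆ ∈ Ioo 0 1 :=
  ⟨by unfold pstar; positivity, by unfold pstar; rw [div_lt_one (by positivity)]; linarith⟩

lemma plowStar_mem_Ioo (hu : 0 < ulL * rho + c) (hE : rho * ulR + c < lam * (urR - ulR)) :
    p̲⋆ ∈ Ioo 0 1 := by
  have hd : ulL * rho + c < rho * (ulL - ulR) + (urR - ulR) * lam := by linarith
  exact ⟨div_pos hu (hu.trans hd), (div_lt_one (hu.trans hd)).2 hd⟩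

lemma hasDerivAt_Vlown (hlam : 0 < lam) (hrho : 0 < rho) (hp₀ : 0 < p) (hp₁ : p < 1) :
    HasDerivAt (Vlown urR ulR urL ulL lam rho c)
      ((lam * p * urR - c - (rho + lam * p) * Vlown urR ulR urL ulL lam rho c p)
        / (lam * p * (1 - p))) p := by
  set C := lam * (c + ulL * rho) / (rho * (lam + rho)) * (p̲⋆ / (1 - p̲⋆)) ^ (rho / lam)
  have hV : Vlown urR ulR urL ulL lam rho c = fun q => -(c / rho) * (1 - q)
      + (urR * lam - c) / (lam + rho) * q
      + C * (((1 - q) / (1 - (1 - q))) ^ (rho / lam) * (1 - q)) := by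
    funext q; simp only [Vlown, sub_sub_cancel, C]; ring
  have hg := (hasDerivAt_odds_rpow_mul_self (α := rho / lam) (sub_pos.2 hp₁)
    (sub_lt_self 1 hp₀)).comp p ((hasDerivAt_id p).const_sub 1)
  rw [hV]
  refine ((((hasDerivAt_id p).const_sub 1).const_mul (-(c / rho))).add
    ((hasDerivAt_id p).const_mul ((urR * lam - c) / (lam + rho)))).add
    (hg.const_mul C) |>.congr_deriv ?_
  have : (1 : ℝ) - p ≠ 0 := (sub_pos.2 hp₁).ne'
  simp only [sub_sub_cancel]
  field_simp
  ring

lemma hasDerivAt_Vlopp (hlam : 0 < lam) (hrho : 0 < rho) (hs : p⋆ ∈ Ioo 0 1) (hp₀ : 0 < p)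
    (hp₁ : p < 1) :
    HasDerivAt (Vlopp urR ulR urL ulL lam rho c)
      (((rho + lam * (1 - p)) * Vlopp urR ulR urL ulL lam rho c p + c - lam * (1 - p) * ulL)
        / (lam * p * (1 - p))) p := by
  set C := lam / (rho * (2 * rho + lam)) * (lam * (urR * rho + c) / (lam + rho))
    * ((1 - p⋆) / p⋆) ^ (rho / lam)
  have hV : Vlopp urR ulR urL ulL lam rho c =ᶠ[𝓝 p] fun q => -(c / rho) * q
      + (ulL * lam - c) / (lam + rho) * (1 - q) + C * ((q / (1 - q)) ^ (rho / lam) * q) := by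
    filter_upwards [Ioo_mem_nhds hp₀ hp₁] with q hq
    rw [Vlopp, Real.mul_rpow (div_pos (sub_pos.2 hs.2) hs.1).le
      (div_pos hq.1 (sub_pos.2 hq.2)).le]
    ring
  refine (((((hasDerivAt_id p).const_mul (-(c / rho))).add
    (((hasDerivAt_id p).const_sub 1).const_mul ((ulL * lam - c) / (lam + rho)))).add
    ((hasDerivAt_odds_rpow_mul_self hp₀ hp₁).const_mul C)).congr_of_eventuallyEq hV).congr_deriv ?_
  have : (1 : ℝ) - p ≠ 0 := (sub_pos.2 hp₁).ne'
  rw [hV.eq_of_nhds]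
  field_simp
  ring

lemma one_sub_pstar_div_pstar (hu : 0 < ulL * rho + c) (hv : 0 < urR * rho + c) :
    (1 - p⋆) / p⋆ = (urR * rho + c) / (ulL * rho + c) := by
  rw [pstar, one_sub_div (by positivity), add_sub_cancel_right,
    div_div_div_cancel_right₀ (by positivity)]

lemma Vlopp_sub_US (hlam : 0 < lam) (hrho : 0 < rho) (hu : 0 < ulL * rho + c)
    (hv : 0 < urR * rho + c) (hp₁ : p < 1) :
    Vlopp urR ulR urL ulL lam rho c p - US urR ulR urL ulL lam rho c p
      = lam ^ 2 * (1 - p) * (ulL * rho + c) / (rho * (lam + rho) * (2 * rho + lam))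
        * tangentGap (rho / lam) ((urR * rho + c) / (ulL * rho + c) * (p / (1 - p))) := by
  have : (1 : ℝ) - p ≠ 0 := (sub_pos.2 hp₁).ne'
  have : rho * ulL + c ≠ 0 := by rw [mul_comm]; exact hu.ne'
  rw [Vlopp, US, tangentGap, one_sub_pstar_div_pstar hu hv]
  generalize ((urR * rho + c) / (ulL * rho + c) * (p / (1 - p))) ^ (rho / lam) = X
  field_simp
  ring

lemma odds_mem_Ioo (hu : 0 < ulL * rho + c) (hv : 0 < urR * rho + c) (hp₀ : 0 < p)
    (hps : p < p⋆) : (urR * rho + c) / (ulL * rho + c) * (p / (1 - p)) ∈ Ioo 0 1 := by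
  have hp₁ : 0 < 1 - p := sub_pos.2 (hps.trans (pstar_mem_Ioo_s12 hu hv).2)
  refine ⟨by positivity, ?_⟩
  rw [div_mul_div_comm, div_lt_one (by positivity)]
  rw [pstar, lt_div_iff₀ (by positivity)] at hps
  linarith

lemma US_lt_Vlopp (hlam : 0 < lam) (hrho : 0 < rho) (hu : 0 < ulL * rho + c)
    (hv : 0 < urR * rho + c) (hp₀ : 0 < p) (hps : p < p⋆) :
    US urR ulR urL ulL lam rho c p < Vlopp urR ulR urL ulL lam rho c p := by
  have hx := odds_mem_Ioo hu hv hp₀ hps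
  have hp₁ : 0 < 1 - p := sub_pos.2 (hps.trans (pstar_mem_Ioo_s12 hu hv).2)
  rw [← sub_pos, Vlopp_sub_US hlam hrho hu hv (sub_pos.1 hp₁)]
  exact mul_pos (by positivity) (tangentGap_pos (by positivity) hx.1 hx.2.ne)

lemma Vlopp_lt_US_add (hlam : 0 < lam) (hrho : 0 < rho) (hu : 0 < ulL * rho + c)
    (hv : 0 < urR * rho + c) (hp₀ : 0 < p) (hps : p < p⋆) :
    Vlopp urR ulR urL ulL lam rho c p < US urR ulR urL ulL lam rho c p
      + lam / ((lam + rho) * (2 * rho + lam))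
        * ((1 - p) * (ulL * rho + c) - p * (urR * rho + c)) := by
  have hx := odds_mem_Ioo hu hv hp₀ hps
  have hp₁ : 0 < 1 - p := sub_pos.2 (hps.trans (pstar_mem_Ioo_s12 hu hv).2)
  rw [← sub_lt_iff_lt_add', Vlopp_sub_US hlam hrho hu hv (sub_pos.1 hp₁)]
  calc _ < lam ^ 2 * (1 - p) * (ulL * rho + c) / (rho * (lam + rho) * (2 * rho + lam))
        * (rho / lam * (1 - (urR * rho + c) / (ulL * rho + c) * (p / (1 - p)))) :=
      mul_lt_mul_of_pos_left (tangentGap_lt (by positivity) hx.1 hx.2) (by positivity)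
    _ = _ := by field_simp

lemma Vlopp_pstar (hlam : 0 < lam) (hrho : 0 < rho) (hu : 0 < ulL * rho + c)
    (hv : 0 < urR * rho + c) :
    Vlopp urR ulR urL ulL lam rho c p⋆ = US urR ulR urL ulL lam rho c p⋆ := by
  have hs : p⋆ ∈ Ioo 0 1 := pstar_mem_Ioo_s12 hu hv
  have hx : (urR * rho + c) / (ulL * rho + c) * (p⋆ / (1 - p⋆)) = 1 := by
    have := hs.1.ne'
    have := (sub_pos.2 hs.2).ne'
    rw [← one_sub_pstar_div_pstar hu hv]
    field_simp
  rw [← sub_eq_zero, Vlopp_sub_US hlam hrho hu hv hs.2, hx, tangentGap_one, mul_zero]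

lemma US_add_le_Vlown (hlam : 0 < lam) (hrho : 0 < rho) (hu : 0 < ulL * rho + c)
    (ha : p̲⋆ < 1) (hp₀ : 0 < p) (hpa : p ≤ p̲⋆) :
    US urR ulR urL ulL lam rho c p
      + lam / ((lam + rho) * (2 * rho + lam)) * (p * (urR * rho + c) + (1 - p) * (ulL * rho + c))
      ≤ Vlown urR ulR urL ulL lam rho c p := by
  have ha₀ : 0 < p̲⋆ := hp₀.trans_le hpa
  have ha₁ : 0 < 1 - p̲⋆ := sub_pos.2 ha
  have hp₁ : 0 < 1 - p := by linarith
  have hK : 1 ≤ (p̲⋆ / (1 - p̲⋆)) ^ (rho / lam) * ((1 - p) / p) ^ (rho / lam) := by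
    rw [← Real.mul_rpow (by positivity) (by positivity)]
    refine Real.one_le_rpow ?_ (by positivity)
    rw [div_mul_div_comm, one_le_div (by positivity)]
    nlinarith
  have hgap : Vlown urR ulR urL ulL lam rho c p - US urR ulR urL ulL lam rho c p
      - lam / ((lam + rho) * (2 * rho + lam)) * (p * (urR * rho + c) + (1 - p) * (ulL * rho + c))
      = lam * (c + ulL * rho) / (rho * (lam + rho)) * (1 - p)
        * ((p̲⋆ / (1 - p̲⋆)) ^ (rho / lam) * ((1 - p) / p) ^ (rho / lam) - 1) := by
    rw [Vlown, US]
    generalize (p̲⋆ / (1 - p̲⋆)) ^ (rho / lam) = Y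
    generalize ((1 - p) / p) ^ (rho / lam) = Z
    field_simp
    ring
  have : 0 ≤ lam * (c + ulL * rho) / (rho * (lam + rho)) * (1 - p)
      * ((p̲⋆ / (1 - p̲⋆)) ^ (rho / lam) * ((1 - p) / p) ^ (rho / lam) - 1) := by
    have : 0 < c + ulL * rho := by linarith
    exact mul_nonneg (by positivity) (sub_nonneg.2 hK)
  linarith

theorem exists_crossesDownAt_Vlown_Vlopp (hlam : 0 < lam) (hrho : 0 < rho)
    (hu : 0 < ulL * rho + c) (hv : 0 < urR * rho + c) (hE : rho * ulR + c < lam * (urR - ulR))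
    (hV : Vlown urR ulR urL ulL lam rho c p⋆ < US urR ulR urL ulL lam rho c p⋆) :
    p̲⋆ < p⋆ ∧ ∃ pl, CrossesDownAt_s12 (Vlown urR ulR urL ulL lam rho c)
      (Vlopp urR ulR urL ulL lam rho c) p̲⋆ p⋆ pl := by
  have hs : p⋆ ∈ Ioo 0 1 := pstar_mem_Ioo_s12 hu hv
  have ha : p̲⋆ ∈ Ioo 0 1 := plowStar_mem_Ioo hu hE
  have hκ : 0 < lam / ((lam + rho) * (2 * rho + lam)) := by positivity
  have has : p̲⋆ < p⋆ := by
    by_contra! hsa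
    have hpos : 0 < p⋆ * (urR * rho + c) + (1 - p⋆) * (ulL * rho + c) := by
      nlinarith [hs.1, hs.2]
    linarith [US_add_le_Vlown hlam hrho hu ha.2 hs.1 hsa, mul_pos hκ hpos]
  refine ⟨has, exists_crossesDownAt has.le (fun x hx => hasDerivAt_Vlown hlam hrho
    (ha.1.trans_le hx.1) (hx.2.trans_lt hs.2)) (fun x hx => hasDerivAt_Vlopp hlam hrho hs
    (ha.1.trans_le hx.1) (hx.2.trans_lt hs.2)) (fun x hx hcross => ?_) ?_ ?_⟩
  · -- Subtracting the two HJB equations at a crossing leaves `(2ρ + λ) (U^S - V)`.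
    have hx₀ : 0 < x := ha.1.trans hx.1
    have hx₁ : 0 < 1 - x := sub_pos.2 (hx.2.trans hs.2)
    have hopp := US_lt_Vlopp hlam hrho hu hv hx₀ hx.2
    rw [← sub_neg, ← sub_div, hcross]
    refine div_neg_of_neg_of_pos ?_ (by positivity)
    have hUS : (2 * rho + lam) * US urR ulR urL ulL lam rho c x
        = lam * (x * urR + (1 - x) * ulL) - 2 * c := by
      rw [US]; field_simp
    linarith [mul_lt_mul_of_pos_left hopp (by positivity : (0 : ℝ) < 2 * rho + lam)]
  · have h₁ := US_add_le_Vlown hlam hrho hu ha.2 ha.1 le_rfl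
    have h₂ := Vlopp_lt_US_add hlam hrho hu hv ha.1 has
    linarith [mul_pos hκ (mul_pos ha.1 hv)]
  · rwa [Vlopp_pstar hlam hrho hu hv]

end Branches

section Symmetry

variable {urR ulR urL ulL lam rho c : ℝ}

lemma US_swap (p : ℝ) : US ulL urL ulR urR lam rho c (1 - p) = US urR ulR urL ulL lam rho c p := by
  unfold US; ring

lemma pstar_swap (h : (urR * rho + c) + (ulL * rho + c) ≠ 0) :
    pstar ulL urL ulR urR lam rho c = 1 - pstar urR ulR urL ulL lam rho c := by
  rw [pstar, pstar, eq_sub_iff_add_eq, add_comm (ulL * rho + c), ← add_div,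
    div_self h]

lemma plowStar_swap (h : rho * (urR - urL) + (ulL - urL) * lam ≠ 0) :
    plowStar ulL urL ulR urR lam rho c = 1 - phighStar urR ulR urL ulL lam rho c := by
  rw [plowStar, phighStar, eq_sub_iff_add_eq, ← add_div, div_eq_one_iff_eq h]
  ring

lemma Vlown_swap (h : rho * (urR - urL) + (ulL - urL) * lam ≠ 0) (p : ℝ) :
    Vlown ulL urL ulR urR lam rho c (1 - p) = Vhown urR ulR urL ulL lam rho c p := by
  rw [Vlown, Vhown, plowStar_swap h, sub_sub_cancel, sub_sub_cancel]

lemma Vlopp_swap (h : (urR * rho + c) + (ulL * rho + c) ≠ 0) (p : ℝ) :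
    Vlopp ulL urL ulR urR lam rho c (1 - p) = Vhopp urR ulR urL ulL lam rho c p := by
  rw [Vlopp, Vhopp, pstar_swap h, sub_sub_cancel, sub_sub_cancel]

end Symmetry

lemma UFA_phat_sub_U_phat {urR ulR urL ulL lam rho c : ℝ} (hD : urR - ulR + (ulL - urL) ≠ 0)
    (hrl : rho + lam ≠ 0) :
    UFA urR ulR urL ulL lam rho c (phat urR ulR urL ulL lam rho c)
        - U urR ulR urL ulL lam rho c (phat urR ulR urL ulL lam rho c)
      = (lam * (urR - ulR) * (ulL - urL) - c * (urR - ulR + (ulL - urL))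
          - rho * (urR * ulL - urL * ulR)) / ((urR - ulR + (ulL - urL)) * (rho + lam)) := by
  have hUr : Ur urR ulR urL ulL lam rho c (phat urR ulR urL ulL lam rho c)
      = Ul urR ulR urL ulL lam rho c (phat urR ulR urL ulL lam rho c) := by
    rw [Ur, Ul, phat]; field_simp; ring
  rw [U, hUr, max_self, UFA, Ul, phat]
  field_simp
  ring

lemma lt_of_UFA_phat_gt_U_phat {urR ulR urL ulL lam rho c : ℝ} (hurR : 0 < urR) (hulR : ulR < urR)
    (hulL : 0 < ulL) (hurL : urL < ulL) (hlam : 0 < lam) (hrho : 0 < rho) (hc : 0 ≤ c)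
    (hEXP : UFA urR ulR urL ulL lam rho c (phat urR ulR urL ulL lam rho c)
      > U urR ulR urL ulL lam rho c (phat urR ulR urL ulL lam rho c)) :
    rho * ulR + c < lam * (urR - ulR) ∧ rho * urL + c < lam * (ulL - urL) := by
  have hD : 0 < urR - ulR + (ulL - urL) := by linarith
  rw [gt_iff_lt, ← sub_pos, UFA_phat_sub_U_phat hD.ne' (by positivity)] at hEXP
  have hN := (div_pos_iff_of_pos_right (by positivity)).1 hEXP
  constructor
  · nlinarith [mul_pos (mul_pos hrho hulL) (sub_pos.2 hulR), mul_nonneg hc (sub_pos.2 hulR).le]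
  · nlinarith [mul_pos (mul_pos hrho hurR) (sub_pos.2 hurL), mul_nonneg hc (sub_pos.2 hurL).le]

/-- Structure of the solution candidate, case (b): if the own-biased value is strictly
below the stationary value at `p*`, then `p̲* < p* < p̄*` and each own-biased branch
crosses the corresponding opposite-biased branch exactly once. -/
theorem candidate_structure_case_b
    (urR ulR urL ulL lam rho c : ℝ)
    (h_urR : urR > max 0 ulR) (h_ulL : ulL > max 0 urL)
    (h_lam : 0 < lam) (h_rho : 0 < rho) (h_c : 0 ≤ c)
    (h_EXP : UFA urR ulR urL ulL lam rho c (phat urR ulR urL ulL lam rho c)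
      > U urR ulR urL ulL lam rho c (phat urR ulR urL ulL lam rho c))
    (h_case : max (Vlown urR ulR urL ulL lam rho c (pstar urR ulR urL ulL lam rho c))
        (Vhown urR ulR urL ulL lam rho c (pstar urR ulR urL ulL lam rho c))
      < US urR ulR urL ulL lam rho c (pstar urR ulR urL ulL lam rho c)) :
    plowStar urR ulR urL ulL lam rho c < pstar urR ulR urL ulL lam rho c
    ∧ pstar urR ulR urL ulL lam rho c < phighStar urR ulR urL ulL lam rho c
    ∧ (∃ pl ∈ Set.Ioo (plowStar urR ulR urL ulL lam rho c)
          (pstar urR ulR urL ulL lam rho c),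
        Vlown urR ulR urL ulL lam rho c pl = Vlopp urR ulR urL ulL lam rho c pl
        ∧ (∀ q ∈ Set.Ioo (plowStar urR ulR urL ulL lam rho c)
              (pstar urR ulR urL ulL lam rho c),
            Vlown urR ulR urL ulL lam rho c q = Vlopp urR ulR urL ulL lam rho c q →
              q = pl)
        ∧ (∀ q ∈ Set.Ioo (plowStar urR ulR urL ulL lam rho c) pl,
            Vlopp urR ulR urL ulL lam rho c q < Vlown urR ulR urL ulL lam rho c q)
        ∧ (∀ q ∈ Set.Ioo pl (pstar urR ulR urL ulL lam rho c),
            Vlown urR ulR urL ulL lam rho c q < Vlopp urR ulR urL ulL lam rho c q))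
    ∧ (∃ ph ∈ Set.Ioo (pstar urR ulR urL ulL lam rho c)
          (phighStar urR ulR urL ulL lam rho c),
        Vhown urR ulR urL ulL lam rho c ph = Vhopp urR ulR urL ulL lam rho c ph
        ∧ (∀ q ∈ Set.Ioo (pstar urR ulR urL ulL lam rho c)
              (phighStar urR ulR urL ulL lam rho c),
            Vhown urR ulR urL ulL lam rho c q = Vhopp urR ulR urL ulL lam rho c q →
              q = ph)
        ∧ (∀ q ∈ Set.Ioo (pstar urR ulR urL ulL lam rho c) ph,
            Vhown urR ulR urL ulL lam rho c q < Vhopp urR ulR urL ulL lam rho c q)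
        ∧ (∀ q ∈ Set.Ioo ph (phighStar urR ulR urL ulL lam rho c),
            Vhopp urR ulR urL ulL lam rho c q < Vhown urR ulR urL ulL lam rho c q)) := by
  obtain ⟨hurR, hulR⟩ := max_lt_iff.1 h_urR
  obtain ⟨hulL, hurL⟩ := max_lt_iff.1 h_ulL
  obtain ⟨hEl, hEh⟩ := lt_of_UFA_phat_gt_U_phat hurR hulR hulL hurL h_lam h_rho h_c h_EXP
  obtain ⟨hVl, hVh⟩ := max_lt_iff.1 h_case
  have hu : 0 < ulL * rho + c := by positivity
  have hv : 0 < urR * rho + c := by positivity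
  have hsum : (urR * rho + c) + (ulL * rho + c) ≠ 0 := by positivity
  have hden : rho * (urR - urL) + (ulL - urL) * lam ≠ 0 := by nlinarith
  obtain ⟨hls, pl, hpl⟩ := exists_crossesDownAt_Vlown_Vlopp h_lam h_rho hu hv hEl hVl
  obtain ⟨hhs, ph, hph⟩ := exists_crossesDownAt_Vlown_Vlopp h_lam h_rho hv hu hEh
    (by rwa [pstar_swap hsum, Vlown_swap hden, US_swap])
  have hph' := hph.comp_one_sub
  simp only [pstar_swap hsum, plowStar_swap hden,
    Vlown_swap hden, Vlopp_swap hsum, sub_sub_cancel] at hhs hph'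
  exact ⟨hls, by linarith, ⟨pl, hpl⟩, ⟨1 - ph, hph'⟩⟩
end
end
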